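/- Let m > 0 and P ∈ ℝ^d be fixed. The energy increments E₀⁽ⁿ⁺¹⁾(P) − E₀⁽ⁿ⁾(P) satisfy 0 < E₀⁽ⁿ⁺¹⁾(P) − E₀⁽ⁿ⁾(P) ≤ m for all n, and E₀⁽ⁿ⁺¹⁾(P) − E₀⁽ⁿ⁾(P) → m as n → ∞. -/
import Mathlib


set_option maxHeartbeats 1000000 in
/-- For fixed `m > 0` and `P ∈ ℝ^d`, the energy increments
`E₀⁽ⁿ⁺¹⁾(P) − E₀⁽ⁿ⁾(P)` satisfy `0 < E₀⁽ⁿ⁺¹⁾(P) − E₀⁽ⁿ⁾(P) ≤ m` for all `n ≥ 1`,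
and tend to `m` as `n → ∞`. -/
theorem energy_increments_bounds_and_limit
    (d : ℕ) (m : ℝ) (hm : 0 < m)
    (P : EuclideanSpace ℝ (Fin d))
    (c : ℕ → ℝ)
    (hc : ∀ n : ℕ, 1 ≤ n → c n ∈ Set.Ico (0 : ℝ) 1 ∧
      c n = (‖P‖ - c n) / Real.sqrt (m ^ 2 * (n : ℝ) ^ 2 + (‖P‖ - c n) ^ 2))
    (E : ℕ → ℝ)
    (hE : ∀ n : ℕ, E n =
      (c n) ^ 2 / 2 + Real.sqrt (m ^ 2 * (n : ℝ) ^ 2 + (‖P‖ - c n) ^ 2)) :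
    (∀ n : ℕ, 1 ≤ n → 0 < E (n + 1) - E n ∧ E (n + 1) - E n ≤ m) ∧
    Filter.Tendsto (fun n : ℕ => E (n + 1) - E n) Filter.atTop (nhds m) := by
  set p : ℝ := ‖P‖ with hpdef
  have hp : 0 ≤ p := norm_nonneg _
  set S : ℕ → ℝ := fun n => Real.sqrt (m ^ 2 * (n : ℝ) ^ 2 + (p - c n) ^ 2) with hSdef
  -- basic facts about S
  have hSge : ∀ n : ℕ, 1 ≤ n → m * n ≤ S n := by
    intro n hn
    have h1 : (m * (n : ℝ)) ^ 2 ≤ m ^ 2 * (n : ℝ) ^ 2 + (p - c n) ^ 2 := by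
      nlinarith [sq_nonneg (p - c n)]
    calc m * (n : ℝ) = Real.sqrt ((m * (n : ℝ)) ^ 2) :=
          (Real.sqrt_sq (by positivity)).symm
      _ ≤ S n := Real.sqrt_le_sqrt h1
  have hSpos : ∀ n : ℕ, 1 ≤ n → 0 < S n := by
    intro n hn
    have hn1 : (1 : ℝ) ≤ (n : ℝ) := by exact_mod_cast hn
    have := hSge n hn
    nlinarith
  have hSsq : ∀ n : ℕ, S n ^ 2 = m ^ 2 * (n : ℝ) ^ 2 + (p - c n) ^ 2 := by
    intro n
    exact Real.sq_sqrt (by positivity)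
  have hcx : ∀ n : ℕ, 1 ≤ n → p - c n = c n * S n := by
    intro n hn
    have h := (hc n hn).2
    have hs := hSpos n hn
    field_simp at h
    linarith [h]
  have hc0 : ∀ n : ℕ, 1 ≤ n → 0 ≤ c n := fun n hn => (hc n hn).1.1
  have hxnn : ∀ n : ℕ, 1 ≤ n → 0 ≤ p - c n := by
    intro n hn
    rw [hcx n hn]
    exact mul_nonneg (hc0 n hn) (hSpos n hn).le
  have hxle : ∀ n : ℕ, 1 ≤ n → p - c n ≤ p := by
    intro n hn
    have := hc0 n hn
    linarith
  -- key minimality: E n is the minimum of t²/2 + √(m²n² + (p-t)²)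
  have hmin : ∀ n : ℕ, 1 ≤ n → ∀ t : ℝ,
      E n + (t - c n) ^ 2 / 2 ≤ t ^ 2 / 2 +
        Real.sqrt (m ^ 2 * (n : ℝ) ^ 2 + (p - t) ^ 2) := by
    intro n hn t
    set A : ℝ := m ^ 2 * (n : ℝ) ^ 2 with hAdef
    set x : ℝ := p - c n with hxdef
    set y : ℝ := p - t with hydef
    have hApos : 0 ≤ A := by positivity
    have hs : 0 < S n := hSpos n hn
    have hs2 : S n ^ 2 = A + x ^ 2 := hSsq n
    have hcs : x = c n * S n := hcx n hn
    -- Cauchy-Schwarz type inequality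
    have cauchy : A + x * y ≤ Real.sqrt (A + y ^ 2) * S n := by
      have h0 : Real.sqrt (A + y ^ 2) * S n = Real.sqrt ((A + y ^ 2) * (A + x ^ 2)) := by
        rw [Real.sqrt_mul (by positivity)]
      rw [h0]
      calc A + x * y ≤ |A + x * y| := le_abs_self _
        _ = Real.sqrt ((A + x * y) ^ 2) := (Real.sqrt_sq_eq_abs _).symm
        _ ≤ Real.sqrt ((A + y ^ 2) * (A + x ^ 2)) := by
            apply Real.sqrt_le_sqrt
            nlinarith [sq_nonneg (x - y)]
    -- tangent-line bound
    have tangent : S n + c n * (y - x) ≤ Real.sqrt (A + y ^ 2) := by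
      have h1 : S n * (S n + c n * (y - x)) ≤ Real.sqrt (A + y ^ 2) * S n := by
        have : S n * (S n + c n * (y - x)) = A + x * y := by
          linear_combination hs2 + (x - y) * hcs
        rw [this]; exact cauchy
      nlinarith [h1, hs]
    have hEn : E n = c n ^ 2 / 2 + S n := hE n
    have hyx : y - x = c n - t := by rw [hxdef, hydef]; ring
    rw [hEn]
    nlinarith [tangent, hyx]
  -- the two bounds
  have bounds : ∀ n : ℕ, 1 ≤ n → 0 < E (n + 1) - E n ∧ E (n + 1) - E n ≤ m := by
    intro n hn
    have hn1 : 1 ≤ n + 1 := Nat.le_succ_of_le hn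
    have hnr : (1 : ℝ) ≤ (n : ℝ) := by exact_mod_cast hn
    have hcast : ((n + 1 : ℕ) : ℝ) = (n : ℝ) + 1 := by push_cast; ring
    constructor
    · -- lower bound: strict monotonicity
      have h1 := hmin n hn (c (n + 1))
      have h2 : Real.sqrt (m ^ 2 * (n : ℝ) ^ 2 + (p - c (n + 1)) ^ 2) <
          Real.sqrt (m ^ 2 * ((n + 1 : ℕ) : ℝ) ^ 2 + (p - c (n + 1)) ^ 2) := by
        apply Real.sqrt_lt_sqrt (by positivity)
        rw [hcast]
        nlinarith
      have hE1 : E (n + 1) = c (n + 1) ^ 2 / 2 +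
          Real.sqrt (m ^ 2 * ((n + 1 : ℕ) : ℝ) ^ 2 + (p - c (n + 1)) ^ 2) := hE (n + 1)
      nlinarith [sq_nonneg (c (n + 1) - c n)]
    · -- upper bound
      have h1 := hmin (n + 1) hn1 (c n)
      have h2 : Real.sqrt (m ^ 2 * ((n + 1 : ℕ) : ℝ) ^ 2 + (p - c n) ^ 2) ≤ S n + m := by
        have hb : m ^ 2 * ((n + 1 : ℕ) : ℝ) ^ 2 + (p - c n) ^ 2 ≤ (S n + m) ^ 2 := by
          rw [hcast]
          nlinarith [hSsq n, hSge n hn]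
        calc Real.sqrt (m ^ 2 * ((n + 1 : ℕ) : ℝ) ^ 2 + (p - c n) ^ 2)
            ≤ Real.sqrt ((S n + m) ^ 2) := Real.sqrt_le_sqrt hb
          _ = S n + m := Real.sqrt_sq (by nlinarith [hSpos n hn])
      have hEn : E n = c n ^ 2 / 2 + S n := hE n
      nlinarith [sq_nonneg (c n - c (n + 1))]
  refine ⟨bounds, ?_⟩
  -- the remainder r n = E n - m n tends to 0
  set r : ℕ → ℝ := fun n => E n - m * n with hrdef
  set K : ℝ := (p ^ 2 + p ^ 2 * m) / (2 * m ^ 2) with hKdef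
  have hr0 : ∀ n : ℕ, 1 ≤ n → 0 ≤ r n := by
    intro n hn
    have hEn : E n = c n ^ 2 / 2 + S n := hE n
    have h1 := hSge n hn
    have h2 := sq_nonneg (c n)
    have hrn : r n = E n - m * n := rfl
    rw [hrn, hEn]
    linarith
  have hrK : ∀ n : ℕ, 1 ≤ n → r n ≤ K / n := by
    intro n hn
    have hnr : (1 : ℝ) ≤ (n : ℝ) := by exact_mod_cast hn
    have hnpos : (0 : ℝ) < n := by linarith
    have hEn : E n = c n ^ 2 / 2 + S n := hE n
    have hs2 := hSsq n
    have hsge := hSge n hn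
    have hcsx := hcx n hn
    have hx1 := hxnn n hn
    have hx2 := hxle n hn
    have hcn0 := hc0 n hn
    have key : r n * (n : ℝ) * (2 * m ^ 2) ≤ p ^ 2 + p ^ 2 * m := by
      have hcmn : c n * (m * n) ≤ p - c n := by
        calc c n * (m * n) ≤ c n * S n := by
              apply mul_le_mul_of_nonneg_left hsge hcn0
          _ = p - c n := hcsx.symm
      have hxsq : (p - c n) ^ 2 ≤ p ^ 2 := by nlinarith
      have hSmn : (S n - m * n) * (2 * (m * n)) ≤ p ^ 2 := by
        nlinarith [hsge, hs2, hxsq]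
      have hc2 : (c n * (m * n)) ^ 2 ≤ p ^ 2 := by nlinarith [mul_nonneg hcn0 (by positivity : (0:ℝ) ≤ m * n)]
      have t1 : c n ^ 2 * m ^ 2 * (n : ℝ) ≤ p ^ 2 := by
        nlinarith [hc2, hnr, sq_nonneg (c n * m)]
      have t2 : (S n - m * n) * (2 * m ^ 2 * (n : ℝ)) ≤ p ^ 2 * m := by
        nlinarith [hSmn, hm]
      have goal' : r n * (n : ℝ) * (2 * m ^ 2) =
          c n ^ 2 * m ^ 2 * (n : ℝ) + (S n - m * n) * (2 * m ^ 2 * (n : ℝ)) := by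
        have hrn : r n = E n - m * n := rfl
        rw [hrn, hEn]; ring
      rw [goal']
      linarith
    have h2m : (0 : ℝ) < 2 * m ^ 2 := by positivity
    rw [le_div_iff₀ hnpos, hKdef, le_div_iff₀ h2m]
    exact key
  have hrt : Filter.Tendsto r Filter.atTop (nhds 0) := by
    apply squeeze_zero' ?_ ?_ (tendsto_const_div_atTop_nhds_zero_nat K)
    · filter_upwards [Filter.eventually_ge_atTop 1] with n hn using hr0 n hn
    · filter_upwards [Filter.eventually_ge_atTop 1] with n hn using hrK n hn
  have hrt1 : Filter.Tendsto (fun n : ℕ => r (n + 1)) Filter.atTop (nhds 0) :=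
    hrt.comp (Filter.tendsto_add_atTop_nat 1)
  have := ((hrt1.sub hrt).const_add m)
  have heq : (fun n : ℕ => m + (r (n + 1) - r n)) = fun n : ℕ => E (n + 1) - E n := by
    funext n
    simp only [hrdef]
    push_cast
    ring
  rw [heq] at this
  simpa using this
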